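/- For integers a ≥ 1 and i ≥ 3, the quantity ∑_{d | i, d odd, d ≠ 1} (2a)^{i/d} is at most 2·(2a)^{i/3}; in particular |(2a)^i g_{a,i} - (2a)^i| ≤ 2(2a)^{i/3}. -/

import Mathlib

/-- `f_{a,i} = (1/(2i)) ∑_{d ∣ i, d odd} μ(d) (2a)^{i/d}`. -/
noncomputable def fai (a i : ℕ) : ℝ :=
  (1 / (2 * (i : ℝ))) * ∑ d ∈ (Nat.divisors i).filter (fun d => Odd d),
    ((ArithmeticFunction.moebius d : ℤ) : ℝ) * (2 * (a : ℝ)) ^ (i / d)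

/-- `g_{a,i} = 2i f_{a,i} / (2a)^i`. -/
noncomputable def gai (a i : ℕ) : ℝ :=
  2 * (i : ℝ) * fai a i / (2 * (a : ℝ)) ^ i

/-!
The map `d ↦ i / d` is injective on the divisors of `i`, and every odd divisor `d ≠ 1` has
`d ≥ 3`, so the exponents `i / d` are distinct integers in `[0, i / 3]`. The tail sum is therefore
at most the geometric sum `∑_{e ≤ i/3} x^e ≤ 2 x^{i/3}` for `x = 2a ≥ 2`. Since `μ(1) = 1` and
`|μ| ≤ 1`, the same bound controls `(2a)^i g_{a,i} - (2a)^i`, the sum of the terms with `d ≠ 1`.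
-/

open ArithmeticFunction

lemma sum_range_pow_le_two_mul_pow {x : ℝ} (hx : 2 ≤ x) (m : ℕ) :
    ∑ e ∈ Finset.range (m + 1), x ^ e ≤ 2 * x ^ m := by
  induction m with
  | zero => norm_num
  | succ m ih =>
    rw [Finset.sum_range_succ, pow_succ]
    nlinarith [pow_nonneg (by linarith : (0 : ℝ) ≤ x) m]

lemma Nat.div_injOn_divisors (n : ℕ) : Set.InjOn (n / ·) n.divisors := by
  intro d hd d' hd' h
  have hn : n ≠ 0 := (Nat.mem_divisors.mp hd).2
  rw [← Nat.div_div_self (Nat.dvd_of_mem_divisors hd) hn,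
    ← Nat.div_div_self (Nat.dvd_of_mem_divisors hd') hn]
  exact congrArg (n / ·) h

lemma sum_pow_div_le_two_mul_pow_div {x : ℝ} (hx : 2 ≤ x) {n k : ℕ} (hk : 0 < k)
    {S : Finset ℕ} (hSn : S ⊆ n.divisors) (hSk : ∀ d ∈ S, k ≤ d) :
    ∑ d ∈ S, x ^ (n / d) ≤ 2 * x ^ (n / k) := by
  have himage : S.image (n / ·) ⊆ Finset.range (n / k + 1) := by
    intro e he
    obtain ⟨d, hd, rfl⟩ := Finset.mem_image.mp he
    exact Finset.mem_range_succ_iff.mpr (Nat.div_le_div_left (hSk d hd) hk)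
  calc ∑ d ∈ S, x ^ (n / d) = ∑ e ∈ S.image (n / ·), x ^ e :=
        (Finset.sum_image ((Nat.div_injOn_divisors n).mono hSn)).symm
    _ ≤ ∑ e ∈ Finset.range (n / k + 1), x ^ e :=
        Finset.sum_le_sum_of_subset_of_nonneg himage fun _ _ _ => by positivity
    _ ≤ 2 * x ^ (n / k) := sum_range_pow_le_two_mul_pow hx _

lemma pow_div_le_rpow_div {x : ℝ} (hx : 1 ≤ x) (n k : ℕ) :
    x ^ (n / k) ≤ x ^ ((n : ℝ) / k) := by
  rw [← Real.rpow_natCast]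
  exact Real.rpow_le_rpow_of_exponent_le hx Nat.cast_div_le

lemma three_le_of_odd_of_ne_one {d : ℕ} (hodd : Odd d) (h1 : d ≠ 1) : 3 ≤ d := by
  obtain ⟨k, rfl⟩ := hodd
  omega

lemma sum_filter_odd_divisors_eq_add {M : Type*} [AddCommMonoid M] (f : ℕ → M) {n : ℕ}
    (hn : n ≠ 0) :
    ∑ d ∈ n.divisors.filter Odd, f d =
      f 1 + ∑ d ∈ n.divisors.filter (fun d => Odd d ∧ d ≠ 1), f d := by
  have hfilter :
      (n.divisors.filter Odd).erase 1 = n.divisors.filter (fun d => Odd d ∧ d ≠ 1) := by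
    ext d
    simp only [Finset.mem_erase, Finset.mem_filter]
    tauto
  rw [← hfilter, Finset.add_sum_erase _ _ (by simp [hn])]

lemma abs_sum_moebius_mul_le (S : Finset ℕ) (f : ℕ → ℝ) :
    |∑ d ∈ S, ((moebius d : ℤ) : ℝ) * f d| ≤ ∑ d ∈ S, |f d| := by
  refine (Finset.abs_sum_le_sum_abs _ _).trans (Finset.sum_le_sum fun d _ => ?_)
  rw [abs_mul]
  have hμ : |((moebius d : ℤ) : ℝ)| ≤ 1 := by exact_mod_cast abs_moebius_le_one
  exact mul_le_of_le_one_left (abs_nonneg _) hμ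

lemma pow_mul_gai {a i : ℕ} (ha : a ≠ 0) (hi : i ≠ 0) :
    (2 * (a : ℝ)) ^ i * gai a i =
      ∑ d ∈ i.divisors.filter Odd, ((moebius d : ℤ) : ℝ) * (2 * (a : ℝ)) ^ (i / d) := by
  rw [gai, fai]
  field_simp

/-- For `a ≥ 1` and `i ≥ 3`: `∑_{d ∣ i, d odd, d ≠ 1} (2a)^{i/d} ≤ 2 (2a)^{i/3}`;
in particular `|(2a)^i g_{a,i} - (2a)^i| ≤ 2 (2a)^{i/3}`. -/
theorem fai_tail_bound (a i : ℕ) (ha : 1 ≤ a) (hi : 3 ≤ i) :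
    (∑ d ∈ (Nat.divisors i).filter (fun d => Odd d ∧ d ≠ 1), (2 * (a : ℝ)) ^ (i / d))
        ≤ 2 * (2 * (a : ℝ)) ^ ((i : ℝ) / 3)
      ∧ |(2 * (a : ℝ)) ^ i * gai a i - (2 * (a : ℝ)) ^ i|
        ≤ 2 * (2 * (a : ℝ)) ^ ((i : ℝ) / 3) := by
  have hx : (2 : ℝ) ≤ 2 * a := by
    have : (1 : ℝ) ≤ a := by exact_mod_cast ha
    linarith
  have hi0 : i ≠ 0 := by omega
  have htail := calc
    ∑ d ∈ i.divisors.filter (fun d => Odd d ∧ d ≠ 1), (2 * (a : ℝ)) ^ (i / d)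
        ≤ 2 * (2 * (a : ℝ)) ^ (i / 3) :=
      sum_pow_div_le_two_mul_pow_div hx (by norm_num) (Finset.filter_subset _ _) fun _ hd =>
        three_le_of_odd_of_ne_one (Finset.mem_filter.mp hd).2.1 (Finset.mem_filter.mp hd).2.2
    _ ≤ 2 * (2 * (a : ℝ)) ^ ((i : ℝ) / 3) := by
      have := pow_div_le_rpow_div (by linarith : (1 : ℝ) ≤ 2 * a) i 3
      rw [Nat.cast_ofNat] at this
      gcongr
  refine ⟨htail, ?_⟩
  rw [pow_mul_gai (by omega) hi0, sum_filter_odd_divisors_eq_add _ hi0]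
  simp only [moebius_apply_one, Int.cast_one, Nat.div_one, one_mul, add_sub_cancel_left]
  refine (abs_sum_moebius_mul_le _ _).trans (le_of_eq_of_le ?_ htail)
  exact Finset.sum_congr rfl fun d _ => abs_of_nonneg (by positivity)
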